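/- arXiv:2206.09797 — 6 statements merged into one kernel-verified Lean document; each statement's English description precedes it below -/
import Mathlib

section
/- Given a strict 2-group datum in which ker(s) and ker(t) commute elementwise (x·y = y·x for all x ∈ ker(s), y ∈ ker(t)), the operation X ∘ Y := X · i(s(X))⁻¹ · Y, defined for composable pairs, satisfies the interchange law: (X·X') ∘ (Y·Y') = (X ∘ Y)·(X' ∘ Y') whenever (X, Y) and (X', Y') are composable pairs. Equivalently, ∘ is a group homomorphism from the fibre-product group {(X, Y) ∈ G₁ × G₁ : s(X) = t(Y)} to G₁. -/
/-- Given a strict 2-group datum in which `ker s` and `ker t` commute elementwise,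
the operation `X ∘ Y := X * i(s X)⁻¹ * Y` satisfies the interchange law on
composable pairs; equivalently, it is a group homomorphism from the fibre-product
group `{(X, Y) | s X = t Y}` to `G₁`. -/
theorem strict_two_group_datum_interchange
    {G₀ G₁ : Type*} [Group G₀] [Group G₁]
    (s t : G₁ →* G₀) (i : G₀ →* G₁)
    (hsi : ∀ g, s (i g) = g) (hti : ∀ g, t (i g) = g)
    (hcomm : ∀ x y : G₁, x ∈ s.ker → y ∈ t.ker → x * y = y * x) :
    ∀ X X' Y Y' : G₁, s X = t Y → s X' = t Y' →
      (X * X') * (i (s (X * X')))⁻¹ * (Y * Y') =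
        (X * (i (s X))⁻¹ * Y) * (X' * (i (s X'))⁻¹ * Y') := by
  intro X X' Y Y' h h'
  have ha : X' * (i (s X'))⁻¹ ∈ s.ker := by
    simp [MonoidHom.mem_ker, hsi]
  have hb : (i (s X))⁻¹ * Y ∈ t.ker := by
    simp [MonoidHom.mem_ker, hti, h]
  have key := hcomm _ _ ha hb
  have h2 : X * (X' * (i (s X'))⁻¹ * ((i (s X))⁻¹ * Y)) * Y'
      = X * ((i (s X))⁻¹ * Y * (X' * (i (s X'))⁻¹)) * Y' := by rw [key]
  rw [map_mul, map_mul, mul_inv_rev]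
  simp only [mul_assoc] at h2 ⊢
  exact h2
end

section
/- Given a strict 2-group datum in which ker(s) and ker(t) commute elementwise, the map inv : G₁ → G₁ defined by inv(X) := i(s(X)) · X⁻¹ · i(t(X)) is a group homomorphism with respect to the group multiplication of G₁. -/
/-- Given a strict 2-group datum in which `ker s` and `ker t` commute elementwise,
the map `inv : G₁ → G₁`, `inv(X) := i(s X) * X⁻¹ * i(t X)`, is a group homomorphism
with respect to the group multiplication of `G₁`. -/
theorem strict_two_group_datum_inv_hom
    {G₀ G₁ : Type*} [Group G₀] [Group G₁]
    (s t : G₁ →* G₀) (i : G₀ →* G₁)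
    (hsi : ∀ g, s (i g) = g) (hti : ∀ g, t (i g) = g)
    (hcomm : ∀ x y : G₁, x ∈ s.ker → y ∈ t.ker → x * y = y * x) :
    ∀ X Y : G₁,
      i (s (X * Y)) * (X * Y)⁻¹ * i (t (X * Y)) =
        (i (s X) * X⁻¹ * i (t X)) * (i (s Y) * Y⁻¹ * i (t Y)) := by
  intro X Y
  have key := hcomm (i (s Y) * Y⁻¹) (X⁻¹ * i (t X))
    (by simp [MonoidHom.mem_ker, hsi]) (by simp [MonoidHom.mem_ker, hti])
  simp only [map_mul, mul_inv_rev, mul_assoc] at key ⊢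
  have key2 := congrArg (· * i (t Y)) key
  simp only [mul_assoc] at key2
  rw [key2]
end

section
/- Given a strict 2-group datum in which ker(s) and ker(t) commute elementwise, define α(g)(h) := i(g)·h·i(g)⁻¹ for g ∈ G₀ and h ∈ ker(s). Then α(g)(h) ∈ ker(s), α is a left action of G₀ on ker(s) by group automorphisms, and together with the restriction of t to ker(s) it forms a crossed module: t(α(g)(h)) = g·t(h)·g⁻¹ for all g ∈ G₀, h ∈ ker(s), and α(t(h))(x) = h·x·h⁻¹ for all h, x ∈ ker(s). -/
/-- Given a strict 2-group datum in which `ker s` and `ker t` commute elementwise,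
the conjugation `α(g)(h) := i(g) * h * i(g)⁻¹` preserves `ker s`, is a left action
of `G₀` on `ker s` by group automorphisms, and together with the restriction of `t`
to `ker s` forms a crossed module:
`t(α(g)(h)) = g * t(h) * g⁻¹` and `α(t(h))(x) = h * x * h⁻¹`. -/
theorem strict_two_group_datum_crossed_module
    {G₀ G₁ : Type*} [Group G₀] [Group G₁]
    (s t : G₁ →* G₀) (i : G₀ →* G₁)
    (hsi : ∀ g, s (i g) = g) (hti : ∀ g, t (i g) = g)
    (hcomm : ∀ x y : G₁, x ∈ s.ker → y ∈ t.ker → x * y = y * x) :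
    -- α(g)(h) lands in ker s
    (∀ (g : G₀) (h : G₁), h ∈ s.ker → i g * h * (i g)⁻¹ ∈ s.ker)
    -- α is a left action: identity and compatibility
    ∧ (∀ h : G₁, h ∈ s.ker → i 1 * h * (i 1)⁻¹ = h)
    ∧ (∀ (g₁ g₂ : G₀) (h : G₁), h ∈ s.ker →
        i (g₁ * g₂) * h * (i (g₁ * g₂))⁻¹ =
          i g₁ * (i g₂ * h * (i g₂)⁻¹) * (i g₁)⁻¹)
    -- each α(g) is a group automorphism of ker s: multiplicative and bijective
    ∧ (∀ (g : G₀) (h₁ h₂ : G₁), h₁ ∈ s.ker → h₂ ∈ s.ker →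
        i g * (h₁ * h₂) * (i g)⁻¹ = (i g * h₁ * (i g)⁻¹) * (i g * h₂ * (i g)⁻¹))
    ∧ (∀ (g : G₀) (h : G₁), h ∈ s.ker → ∃ x ∈ s.ker, i g * x * (i g)⁻¹ = h)
    ∧ (∀ (g : G₀) (h₁ h₂ : G₁), h₁ ∈ s.ker → h₂ ∈ s.ker →
        i g * h₁ * (i g)⁻¹ = i g * h₂ * (i g)⁻¹ → h₁ = h₂)
    -- first crossed module axiom
    ∧ (∀ (g : G₀) (h : G₁), h ∈ s.ker → t (i g * h * (i g)⁻¹) = g * t h * g⁻¹)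
    -- Peiffer identity
    ∧ (∀ h x : G₁, h ∈ s.ker → x ∈ s.ker →
        i (t h) * x * (i (t h))⁻¹ = h * x * h⁻¹) := by

  refine ⟨?_, ?_, ?_, ?_, ?_, ?_, ?_, ?_⟩
  · intro g h hh
    simp [MonoidHom.mem_ker, MonoidHom.mem_ker.mp hh, hsi]
  · intro h _; simp
  · intro g₁ g₂ h _; simp [mul_assoc]
  · intro g h₁ h₂ _ _; group
  · intro g h hh
    refine ⟨(i g)⁻¹ * h * i g, ?_, by group⟩
    simp [MonoidHom.mem_ker, MonoidHom.mem_ker.mp hh, hsi]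
  · intro g h₁ h₂ _ _ heq
    have := congrArg (fun z => (i g)⁻¹ * z * i g) heq
    simpa [mul_assoc] using this
  · intro g h _; simp [hti]
  · intro h x hh hx
    have hk : h⁻¹ * i (t h) ∈ t.ker := by
      simp [MonoidHom.mem_ker, hti]
    have hc := hcomm x (h⁻¹ * i (t h)) hx hk
    have : i (t h) * x = h * x * (h⁻¹ * i (t h)) := by
      calc i (t h) * x = h * ((h⁻¹ * i (t h)) * x) := by group
        _ = h * (x * (h⁻¹ * i (t h))) := by rw [hc]
        _ = h * x * (h⁻¹ * i (t h)) := by group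
    calc i (t h) * x * (i (t h))⁻¹ = h * x * (h⁻¹ * i (t h)) * (i (t h))⁻¹ := by rw [this]
      _ = h * x * h⁻¹ := by group
end

section
/- For a crossed module (G, H, t, α), equip G₁ := H ⋊_α G with the homomorphisms s(h, g) := g, t̄(h, g) := t(h)·g and i(g) := (1, g). Then s ∘ i = id and t̄ ∘ i = id, and the subgroups ker(s) and ker(t̄) of H ⋊_α G commute elementwise; hence every crossed module gives rise to a strict 2-group datum with commuting kernels. -/
/-- For a crossed module `(G, H, t, α)`, equip `G₁ := H ⋊[α] G` with
`s(h, g) := g`, `t̄(h, g) := t(h) * g` and `i(g) := (1, g)`.  These are group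
homomorphisms, `s ∘ i = id` and `t̄ ∘ i = id`, and the subgroups `ker s` and
`ker t̄` commute elementwise; hence every crossed module gives rise to a strict
2-group datum with commuting kernels. -/
theorem crossed_module_to_strict_two_group_datum
    {G H : Type*} [Group G] [Group H]
    (t : H →* G) (α : G →* MulAut H)
    (hcm1 : ∀ (g : G) (h : H), t (α g h) = g * t h * g⁻¹)
    (hcm2 : ∀ h x : H, α (t h) x = h * x * h⁻¹) :
    let s' : H ⋊[α] G → G := fun x => x.right
    let tbar : H ⋊[α] G → G := fun x => t x.left * x.right
    let i' : G → H ⋊[α] G := fun g => ⟨1, g⟩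
    (∀ x y : H ⋊[α] G, s' (x * y) = s' x * s' y)
    ∧ (∀ x y : H ⋊[α] G, tbar (x * y) = tbar x * tbar y)
    ∧ (∀ g g' : G, i' (g * g') = i' g * i' g')
    ∧ (∀ g : G, s' (i' g) = g)
    ∧ (∀ g : G, tbar (i' g) = g)
    ∧ (∀ x y : H ⋊[α] G, s' x = 1 → tbar y = 1 → x * y = y * x) := by
  intro s' tbar i'
  refine ⟨fun x y => rfl, fun x y => ?_, fun g g' => ?_, fun g => rfl, fun g => ?_, ?_⟩
  · show t (x.left * α x.right y.left) * (x.right * y.right)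
      = (t x.left * x.right) * (t y.left * y.right)
    rw [map_mul, hcm1]
    group
  · show (⟨(1 : H), g * g'⟩ : H ⋊[α] G) = ⟨1 * α g 1, g * g'⟩
    simp
  · show t 1 * g = g
    simp
  · rintro ⟨h, g⟩ ⟨k, g'⟩ hs ht
    simp only [s'] at hs
    subst hs
    have hg' : g' = (t k)⁻¹ := eq_inv_of_mul_eq_one_right ht
    subst hg'
    ext
    · have h2 : (α (t k))⁻¹ h = k⁻¹ * h * k := by
        rw [← map_inv α, ← map_inv t]
        simpa using hcm2 k⁻¹ h
      simp only [SemidirectProduct.mul_left, map_one, MulAut.one_apply, map_inv]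
      rw [h2]; group
    · show 1 * (t k)⁻¹ = (t k)⁻¹ * 1
      simp
end

section
/- Let (G, H, t, α) be a crossed module and let P₁, P₂ be H-sets with anchors φ₁, φ₂. Then the formula h • (p₁, p₂) := (p₁·h⁻¹, p₂·α(φ₁(p₁)⁻¹)(h)) defines a left action of H on the product set P₁ × P₂. -/
/-- Let `(G, H, t, α)` be a crossed module and let `P₁, P₂` be `H`-sets with
anchors `φ₁, φ₂`.  Then `h • (p₁, p₂) := (p₁ · h⁻¹, p₂ · α(φ₁(p₁)⁻¹)(h))` defines a
left action of `H` on `P₁ × P₂`. -/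
theorem crossed_module_tensor_action
    {G H P₁ P₂ : Type*} [Group G] [Group H]
    (t : H →* G) (α : G →* MulAut H)
    (hcm1 : ∀ (g : G) (h : H), t (α g h) = g * t h * g⁻¹)
    (hcm2 : ∀ h x : H, α (t h) x = h * x * h⁻¹)
    -- P₁ is an H-set with anchor φ₁
    (r₁ : P₁ → H → P₁)
    (hr₁one : ∀ p, r₁ p 1 = p)
    (hr₁mul : ∀ p h h', r₁ (r₁ p h) h' = r₁ p (h * h'))
    (φ₁ : P₁ → G) (hφ₁ : ∀ p h, φ₁ (r₁ p h) = (t h)⁻¹ * φ₁ p)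
    -- P₂ is an H-set with anchor φ₂
    (r₂ : P₂ → H → P₂)
    (hr₂one : ∀ p, r₂ p 1 = p)
    (hr₂mul : ∀ p h h', r₂ (r₂ p h) h' = r₂ p (h * h'))
    (φ₂ : P₂ → G) (hφ₂ : ∀ p h, φ₂ (r₂ p h) = (t h)⁻¹ * φ₂ p) :
    let act : H → P₁ × P₂ → P₁ × P₂ :=
      fun h q => (r₁ q.1 h⁻¹, r₂ q.2 (α (φ₁ q.1)⁻¹ h))
    (∀ q : P₁ × P₂, act 1 q = q)
    ∧ (∀ (h h' : H) (q : P₁ × P₂), act (h * h') q = act h (act h' q)) := by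
  intro act
  constructor
  · intro q
    simp [act, hr₁one, hr₂one]
  · intro h h' q
    have key : φ₁ (r₁ q.1 h'⁻¹) = t h' * φ₁ q.1 := by
      rw [hφ₁]; simp
    have hα : ∀ (g : G) (x : H), α ((t x)⁻¹ * g)⁻¹ = α g⁻¹ * α (t x) := by
      intro g x
      rw [mul_inv_rev, inv_inv, map_mul]
    simp only [act, Prod.mk.injEq]
    constructor
    · rw [hr₁mul, mul_inv_rev]
    · rw [hr₂mul, key]
      congr 1
      have : α (t h' * φ₁ q.1)⁻¹ h = α (φ₁ q.1)⁻¹ (α (t h')⁻¹ h) := by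
        rw [mul_inv_rev, map_mul]; rfl
      rw [this]
      have h2 : α (t h')⁻¹ h = h'⁻¹ * h * h' := by
        have := hcm2 h'⁻¹ h
        rw [map_inv] at this
        simpa using this
      rw [h2, ← map_mul]
      congr 1
      group
end

section
/- Let (G, H, t, α) be a crossed module and let P₁, P₂ be H-sets with anchors φ₁, φ₂. For all p₁ ∈ P₁, p₂ ∈ P₂ and u, v ∈ H, the pairs (p₁·u, p₂·v) and (p₁·(α(φ₁(p₁))(v)·u), p₂) lie in the same orbit of the left H-action h • (q₁, q₂) := (q₁·h⁻¹, q₂·α(φ₁(q₁)⁻¹)(h)) on P₁ × P₂. -/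
/-- Let `(G, H, t, α)` be a crossed module and let `P₁, P₂` be `H`-sets with
anchors `φ₁, φ₂`.  For all `p₁, p₂, u, v`, the pairs `(p₁ · u, p₂ · v)` and
`(p₁ · (α(φ₁(p₁))(v) * u), p₂)` lie in the same orbit of the left `H`-action
`h • (q₁, q₂) := (q₁ · h⁻¹, q₂ · α(φ₁(q₁)⁻¹)(h))` on `P₁ × P₂`. -/
theorem crossed_module_tensor_same_orbit
    {G H P₁ P₂ : Type*} [Group G] [Group H]
    (t : H →* G) (α : G →* MulAut H)
    (hcm1 : ∀ (g : G) (h : H), t (α g h) = g * t h * g⁻¹)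
    (hcm2 : ∀ h x : H, α (t h) x = h * x * h⁻¹)
    (r₁ : P₁ → H → P₁)
    (hr₁one : ∀ p, r₁ p 1 = p)
    (hr₁mul : ∀ p h h', r₁ (r₁ p h) h' = r₁ p (h * h'))
    (φ₁ : P₁ → G) (hφ₁ : ∀ p h, φ₁ (r₁ p h) = (t h)⁻¹ * φ₁ p)
    (r₂ : P₂ → H → P₂)
    (hr₂one : ∀ p, r₂ p 1 = p)
    (hr₂mul : ∀ p h h', r₂ (r₂ p h) h' = r₂ p (h * h'))
    (φ₂ : P₂ → G) (hφ₂ : ∀ p h, φ₂ (r₂ p h) = (t h)⁻¹ * φ₂ p) :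
    ∀ (p₁ : P₁) (p₂ : P₂) (u v : H),
      ∃ h : H,
        (r₁ (r₁ p₁ u) h⁻¹, r₂ (r₂ p₂ v) (α (φ₁ (r₁ p₁ u))⁻¹ h)) =
          (r₁ p₁ (α (φ₁ p₁) v * u), p₂) := by
  intro p₁ p₂ u v
  refine ⟨u⁻¹ * α (φ₁ p₁) v⁻¹ * u, ?_⟩
  have h2 : α (φ₁ (r₁ p₁ u))⁻¹ (u⁻¹ * α (φ₁ p₁) v⁻¹ * u) = v⁻¹ := by
    rw [hφ₁]
    simp only [mul_inv_rev, inv_inv, map_mul, MulAut.mul_apply, map_inv, hcm2]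
    group
    simp [zpow_neg, zpow_one]
  rw [Prod.mk.injEq]
  constructor
  · rw [hr₁mul]
    congr 1
    group
    simp [zpow_neg, zpow_one]
  · rw [h2, hr₂mul, mul_inv_cancel, hr₂one]
end
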